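/- arXiv:1805.04981 — 6 statements merged into one kernel-verified Lean document; each statement's English description precedes it below -/
import Mathlib

section
/- Let α, B1, B2, P̄1, P̄2, L̃1, L̃2 be positive reals with L̃1 < L̃2, and set α1 = α2 = α (equal channel gains). Suppose (P11*, P21*, P23*, R21*, R23*) is a global minimizer of E_M over S_M (the two-slot full multiple access offloading problem) and that P11* + P21* ≤ min(P̄1, P̄2). Then there exists a point (P1, P2, R1, R2) in the TDMA feasible set S_T whose TDMA objective value E_T is at most the optimal value E_M(P11*, P21*, P23*, R21*, R23*). (Proposition 2: with equal channel gains and power budgets above the stated threshold, TDMA achieves the optimal energy consumption of the full multiple access scheme.) -/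
/-- Base-2 logarithm. -/
noncomputable def log2 (x : ℝ) : ℝ := Real.logb 2 x

/-- Feasible set of the two-slot full multiple access offloading problem. -/
def SMFeas (α1 α2 B1 B2 Pb1 Pb2 Lt1 Lt2 P11 P21 P23 R21 R23 : ℝ) : Prop :=
  0 ≤ P11 ∧ P11 ≤ Pb1 ∧ 0 ≤ P21 ∧ P21 ≤ Pb2 ∧ 0 ≤ P23 ∧ P23 ≤ Pb2 ∧
  B1 / Lt1 ≤ log2 (1 + α1 * P11) ∧
  0 ≤ R21 ∧ R21 ≤ log2 (1 + α2 * P21) ∧ Lt1 * R21 ≤ B2 ∧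
  B1 / Lt1 + R21 ≤ log2 (1 + α1 * P11 + α2 * P21) ∧
  0 < R23 ∧ R23 ≤ log2 (1 + α2 * P23) ∧
  Lt1 + (B2 - Lt1 * R21) / R23 ≤ Lt2

/-- Objective of the two-slot full multiple access offloading problem. -/
noncomputable def EM (B2 Lt1 P11 P21 P23 R21 R23 : ℝ) : ℝ :=
  Lt1 * (P11 + P21) + ((B2 - Lt1 * R21) / R23) * P23

/-- Feasible set of the TDMA offloading problem. -/
def TDMAFeas (α1 α2 B1 B2 Pb1 Pb2 Lt1 Lt2 P1 P2 R1 R2 : ℝ) : Prop :=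
  0 ≤ P1 ∧ P1 ≤ Pb1 ∧ 0 ≤ P2 ∧ P2 ≤ Pb2 ∧
  0 < R1 ∧ R1 ≤ log2 (1 + α1 * P1) ∧ 0 < R2 ∧ R2 ≤ log2 (1 + α2 * P2) ∧
  B1 / R1 ≤ Lt1 ∧ B1 / R1 + B2 / R2 ≤ Lt2

/-- TDMA objective (total transmission energy). -/
noncomputable def ET (B1 B2 P1 P2 R1 R2 : ℝ) : ℝ := (B1 / R1) * P1 + (B2 / R2) * P2

theorem timeAvg_rate_le_log2_timeAvg_power {α t₁ t₂ p₁ p₂ r₁ r₂ : ℝ}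
    (ht₁ : 0 ≤ t₁) (ht₂ : 0 ≤ t₂) (ht : 0 < t₁ + t₂)
    (hp₁ : 0 < 1 + α * p₁) (hp₂ : 0 < 1 + α * p₂)
    (hr₁ : r₁ ≤ log2 (1 + α * p₁)) (hr₂ : r₂ ≤ log2 (1 + α * p₂)) :
    (t₁ * r₁ + t₂ * r₂) / (t₁ + t₂) ≤ log2 (1 + α * ((t₁ * p₁ + t₂ * p₂) / (t₁ + t₂))) := by
  set a := t₁ / (t₁ + t₂)
  set b := t₂ / (t₁ + t₂)
  have hab : a + b = 1 := by rw [← add_div, div_self ht.ne']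
  have hmix : a * (1 + α * p₁) + b * (1 + α * p₂) =
      1 + α * ((t₁ * p₁ + t₂ * p₂) / (t₁ + t₂)) := by
    simp only [a, b]; field_simp; ring
  have hlog := strictConcaveOn_log_Ioi.concaveOn.2 (Set.mem_Ioi.2 hp₁) (Set.mem_Ioi.2 hp₂)
    (div_nonneg ht₁ ht.le) (div_nonneg ht₂ ht.le) hab
  simp only [smul_eq_mul] at hlog
  have hlog2 : 0 < Real.log 2 := Real.log_pos one_lt_two
  calc (t₁ * r₁ + t₂ * r₂) / (t₁ + t₂) = a * r₁ + b * r₂ := by simp only [a, b]; ring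
    _ ≤ a * log2 (1 + α * p₁) + b * log2 (1 + α * p₂) := by gcongr
    _ = (a * Real.log (1 + α * p₁) + b * Real.log (1 + α * p₂)) / Real.log 2 := by
      simp only [log2, Real.logb]; ring
    _ ≤ log2 (1 + α * ((t₁ * p₁ + t₂ * p₂) / (t₁ + t₂))) := by
      rw [log2, Real.logb, ← hmix]; exact div_le_div_of_nonneg_right hlog hlog2.le

/-- Equal gains turn the sum-rate bound of slot 1 into the single-user bound of device 1 at
power `P11 + P21`, so device 1 alone can carry all bits of slot 1 at rate `B1 / Lt1 + R21`,
finishing early; device 2 time-shares the freed time `τ` with slot 3 at the time-averaged power,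
which by concavity of the rate in the power is still feasible and costs the same energy. -/
theorem exists_tdmaFeas_ET_eq_EM_of_SMFeas {α B1 B2 Pb1 Pb2 Lt1 Lt2 P11 P21 P23 R21 R23 : ℝ}
    (hα : 0 ≤ α) (hB1 : 0 < B1) (hB2 : 0 < B2) (hLt1 : 0 < Lt1)
    (hfeas : SMFeas α α B1 B2 Pb1 Pb2 Lt1 Lt2 P11 P21 P23 R21 R23)
    (hPb1 : P11 + P21 ≤ Pb1) (hPb2 : P11 + P21 ≤ Pb2) :
    ∃ P1 P2 R1 R2, TDMAFeas α α B1 B2 Pb1 Pb2 Lt1 Lt2 P1 P2 R1 R2 ∧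
      ET B1 B2 P1 P2 R1 R2 = EM B2 Lt1 P11 P21 P23 R21 R23 := by
  obtain ⟨hP11, -, hP21, -, hP23, hP23b, -, hR21, -, hR21B2, hsum, hR23, hR23c, htime⟩ := hfeas
  set P1 := P11 + P21
  set R1 := B1 / Lt1 + R21
  set τ := Lt1 - B1 / R1
  set t3 := (B2 - Lt1 * R21) / R23
  set T := τ + t3
  have hR1 : 0 < R1 := by positivity
  have hτR1 : τ * R1 = Lt1 * R21 := by simp only [τ, R1]; field_simp; ring
  have hτ : 0 ≤ τ := nonneg_of_mul_nonneg_left (hτR1 ▸ by positivity) hR1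
  have ht3R23 : t3 * R23 = B2 - Lt1 * R21 := div_mul_cancel₀ _ hR23.ne'
  have ht3 : 0 ≤ t3 := div_nonneg (by linarith) hR23.le
  have hbits : τ * R1 + t3 * R23 = B2 := by linarith
  have hT : 0 < T := by
    by_contra! h
    have hτ0 : τ = 0 := by linarith
    have ht30 : t3 = 0 := by linarith
    rw [hτ0, ht30] at hbits
    linarith
  have hR1log : R1 ≤ log2 (1 + α * P1) := by simpa only [P1, mul_add, add_assoc] using hsum
  have hP1pos : 0 < 1 + α * P1 := by positivity
  have hP23pos : 0 < 1 + α * P23 := by positivity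
  have hB2T : B2 / (B2 / T) = T := div_div_cancel₀ hB2.ne'
  refine ⟨P1, (τ * P1 + t3 * P23) / T, R1, B2 / T,
    ⟨by positivity, hPb1, by positivity, ?_, hR1, hR1log, by positivity, ?_, by linarith, ?_⟩, ?_⟩
  · rw [div_le_iff₀ hT]
    linarith [mul_le_mul_of_nonneg_left hPb2 hτ, mul_le_mul_of_nonneg_left hP23b ht3]
  · rw [← hbits]
    exact timeAvg_rate_le_log2_timeAvg_power hτ ht3 hT hP1pos hP23pos hR1log hR23c
  · rw [hB2T]
    linarith
  · rw [ET, EM, hB2T, mul_div_cancel₀ _ hT.ne']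
    ring

theorem tdma_achieves_fullMA_equal_gains_general
    (α B1 B2 Pb1 Pb2 Lt1 Lt2 P11s P21s P23s R21s R23s : ℝ)
    (hα : 0 < α) (hB1 : 0 < B1) (hB2 : 0 < B2)
    (hLt1 : 0 < Lt1)
    (hfeas : SMFeas α α B1 B2 Pb1 Pb2 Lt1 Lt2 P11s P21s P23s R21s R23s)
    (hthr : P11s + P21s ≤ min Pb1 Pb2) :
    ∃ P1 P2 R1 R2, TDMAFeas α α B1 B2 Pb1 Pb2 Lt1 Lt2 P1 P2 R1 R2 ∧
      ET B1 B2 P1 P2 R1 R2 ≤ EM B2 Lt1 P11s P21s P23s R21s R23s := by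
  obtain ⟨P1, P2, R1, R2, htdma, hE⟩ := exists_tdmaFeas_ET_eq_EM_of_SMFeas hα.le hB1 hB2 hLt1
    hfeas (hthr.trans (min_le_left _ _)) (hthr.trans (min_le_right _ _))
  exact ⟨P1, P2, R1, R2, htdma, hE.le⟩

/-- Proposition 2: with equal channel gains and power budgets above the stated threshold,
TDMA achieves the optimal energy consumption of the full multiple access scheme. -/
theorem tdma_achieves_fullMA_equal_gains
    (α B1 B2 Pb1 Pb2 Lt1 Lt2 P11s P21s P23s R21s R23s : ℝ)
    (hα : 0 < α) (hB1 : 0 < B1) (hB2 : 0 < B2)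
    (hPb1 : 0 < Pb1) (hPb2 : 0 < Pb2) (hLt1 : 0 < Lt1) (hLt2 : 0 < Lt2)
    (hL : Lt1 < Lt2)
    (hfeas : SMFeas α α B1 B2 Pb1 Pb2 Lt1 Lt2 P11s P21s P23s R21s R23s)
    (hopt : ∀ P11 P21 P23 R21 R23, SMFeas α α B1 B2 Pb1 Pb2 Lt1 Lt2 P11 P21 P23 R21 R23 →
      EM B2 Lt1 P11s P21s P23s R21s R23s ≤ EM B2 Lt1 P11 P21 P23 R21 R23)
    (hthr : P11s + P21s ≤ min Pb1 Pb2) :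
    ∃ P1 P2 R1 R2, TDMAFeas α α B1 B2 Pb1 Pb2 Lt1 Lt2 P1 P2 R1 R2 ∧
      ET B1 B2 P1 P2 R1 R2 ≤ EM B2 Lt1 P11s P21s P23s R21s R23s :=
  tdma_achieves_fullMA_equal_gains_general α B1 B2 Pb1 Pb2 Lt1 Lt2 P11s P21s P23s R21s R23s hα hB1
    hB2 hLt1 hfeas hthr
end

section
/- Let α1, α2, B1, B2, P̄1, P̄2, L̃1, L̃2 be positive reals with L̃1 ≤ L̃2. For every feasible point of the three-slot full multiple access offloading problem with R12 > 0 and R23 > 0, there exists a feasible point of the two-slot full multiple access offloading problem (in which the first slot has duration L̃1, user 1 transmits all B1 bits in the first slot, and user 2 transmits alone in the second slot) whose objective value equals the objective value of the given three-slot point. Consequently the infimum of the two-slot problem is at most the infimum of the three-slot problem (so two time slots suffice for optimality). -/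
/-- Feasible set of the three-slot full multiple access offloading problem. -/
def ThreeFeas (α1 α2 B1 B2 Pb1 Pb2 Lt1 Lt2 τ1 P11 P12 P21 P23 R11 R12 R21 R23 : ℝ) : Prop :=
  0 ≤ τ1 ∧ 0 ≤ R11 ∧ 0 ≤ R21 ∧
  0 ≤ τ1 * R11 ∧ τ1 * R11 ≤ B1 ∧ 0 ≤ τ1 * R21 ∧ τ1 * R21 ≤ B2 ∧
  τ1 + (B1 - τ1 * R11) / R12 ≤ Lt1 ∧
  τ1 + (B1 - τ1 * R11) / R12 + (B2 - τ1 * R21) / R23 ≤ Lt2 ∧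
  0 ≤ P11 ∧ P11 ≤ Pb1 ∧ 0 ≤ P12 ∧ P12 ≤ Pb1 ∧
  0 ≤ P21 ∧ P21 ≤ Pb2 ∧ 0 ≤ P23 ∧ P23 ≤ Pb2 ∧
  R12 ≤ log2 (1 + α1 * P12) ∧ R23 ≤ log2 (1 + α2 * P23) ∧
  R11 ≤ log2 (1 + α1 * P11) ∧ R21 ≤ log2 (1 + α2 * P21) ∧
  R11 + R21 ≤ log2 (1 + α1 * P11 + α2 * P21)

/-- Objective of the three-slot full multiple access offloading problem. -/
noncomputable def ThreeObj (B1 B2 τ1 P11 P12 P21 P23 R11 R12 R21 R23 : ℝ) : ℝ :=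
  τ1 * (P11 + P21) + ((B1 - τ1 * R11) / R12) * P12 + ((B2 - τ1 * R21) / R23) * P23

theorem ConcaveOn.sum_smul_le_map_sum_of_sum_le_one {𝕜 E β ι : Type*} [Field 𝕜] [LinearOrder 𝕜]
    [IsStrictOrderedRing 𝕜] [AddCommGroup E] [AddCommGroup β] [PartialOrder β]
    [IsOrderedAddMonoid β] [Module 𝕜 E] [Module 𝕜 β] [IsStrictOrderedModule 𝕜 β]
    {s : Set E} {f : E → β} {t : Finset ι} {w : ι → 𝕜} {p : ι → E}
    (hf : ConcaveOn 𝕜 s f) (hs : 0 ∈ s) (hf₀ : 0 ≤ f 0) (h₀ : ∀ i ∈ t, 0 ≤ w i)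
    (h₁ : ∑ i ∈ t, w i ≤ 1) (hmem : ∀ i ∈ t, p i ∈ s) :
    ∑ i ∈ t, w i • f (p i) ≤ f (∑ i ∈ t, w i • p i) := by
  have hv : 0 ≤ 1 - ∑ i ∈ t, w i := sub_nonneg.2 h₁
  have := hf.map_add_sum_le h₀ (sub_add_cancel 1 _) hmem hv hs
  rw [smul_zero, zero_add] at this
  exact le_trans (le_add_of_nonneg_left (smul_nonneg hv hf₀)) this

theorem concaveOn_log2_one_add : ConcaveOn ℝ (Set.Ici 0) fun x => log2 (1 + x) := by
  have h := (strictConcaveOn_log_Ioi.concaveOn.translate_right (1 : ℝ)).smul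
    (inv_nonneg.2 (Real.log_nonneg one_le_two))
  refine (h.subset (fun x (hx : 0 ≤ x) => ?_) (convex_Ici 0)).congr fun x _ => ?_
  · show (0 : ℝ) < 1 + x
    linarith
  · simp [log2, Real.logb, div_eq_inv_mul]

theorem log2_one_add_time_sharing {L a b c x y z : ℝ} (hL : 0 < L) (ha : 0 ≤ a) (hb : 0 ≤ b)
    (hc : 0 ≤ c) (habc : a + b + c ≤ L) (hx : 0 ≤ x) (hy : 0 ≤ y) (hz : 0 ≤ z) :
    a * log2 (1 + x) + b * log2 (1 + y) + c * log2 (1 + z) ≤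
      L * log2 (1 + (a * x + b * y + c * z) / L) := by
  have h := concaveOn_log2_one_add.sum_smul_le_map_sum_of_sum_le_one (t := Finset.univ)
    (w := ![a / L, b / L, c / L]) (p := ![x, y, z]) Set.self_mem_Ici (by simp [log2])
    (by simp [Fin.forall_fin_succ]; exact ⟨by positivity, by positivity, by positivity⟩) ?_
    (by simp [Fin.forall_fin_succ, *])
  · simp only [Fin.sum_univ_three, Matrix.cons_val_zero, Matrix.cons_val_one, Matrix.cons_val_two,
      Matrix.tail_cons, Matrix.head_cons, smul_eq_mul] at h
    calc a * log2 (1 + x) + b * log2 (1 + y) + c * log2 (1 + z)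
        = L * (a / L * log2 (1 + x) + b / L * log2 (1 + y) + c / L * log2 (1 + z)) := by
          field_simp
      _ ≤ L * log2 (1 + (a / L * x + b / L * y + c / L * z)) := by gcongr
      _ = L * log2 (1 + (a * x + b * y + c * z) / L) := by ring_nf
  · simp only [Fin.sum_univ_three, Matrix.cons_val_zero, Matrix.cons_val_one, Matrix.cons_val_two,
      Matrix.tail_cons, Matrix.head_cons]
    rw [← add_div, ← add_div, div_le_one hL]
    exact habc

theorem add_mul_div_mem_Icc {L a b x y P : ℝ} (hL : 0 < L) (ha : 0 ≤ a) (hb : 0 ≤ b)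
    (hab : a + b ≤ L) (hx : x ∈ Set.Icc 0 P) (hy : y ∈ Set.Icc 0 P) :
    (a * x + b * y) / L ∈ Set.Icc 0 P := by
  obtain ⟨hx₀, hxP⟩ := hx
  obtain ⟨hy₀, hyP⟩ := hy
  refine ⟨by positivity, (div_le_iff₀ hL).2 ?_⟩
  nlinarith [mul_le_mul_of_nonneg_left hxP ha, mul_le_mul_of_nonneg_left hyP hb,
    mul_nonneg (sub_nonneg.2 hab) (hx₀.trans hxP)]

theorem sub_mul_div_eq_of_add_mul_eq {L τ m t R r B : ℝ} (hL : L ≠ 0) (hR : R ≠ 0)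
    (hB : τ * r + t * R = B) :
    (B - L * ((τ * r + m * R) / L)) / R = t - m := by
  rw [← hB, mul_div_cancel₀ _ hL, eq_sub_iff_add_eq, div_add' _ _ _ hR, div_eq_iff hR]
  ring

section Merge

variable {α1 α2 B1 B2 Pb1 Pb2 Lt1 Lt2 τ1 P11 P12 P21 P23 R11 R12 R21 R23 t2 t3 m : ℝ}

theorem smFeas_merge (hα1 : 0 ≤ α1) (hα2 : 0 ≤ α2) (hLt1 : 0 < Lt1)
    (hF : ThreeFeas α1 α2 B1 B2 Pb1 Pb2 Lt1 Lt2 τ1 P11 P12 P21 P23 R11 R12 R21 R23)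
    (hR23 : 0 < R23) (ht2 : 0 ≤ t2) (hB1 : τ1 * R11 + t2 * R12 = B1)
    (hB2 : τ1 * R21 + t3 * R23 = B2) (hm : 0 ≤ m) (hmt3 : m ≤ t3) (hslot : τ1 + t2 + m ≤ Lt1)
    (hdeadline : Lt1 + (t3 - m) ≤ Lt2) :
    SMFeas α1 α2 B1 B2 Pb1 Pb2 Lt1 Lt2 ((τ1 * P11 + t2 * P12) / Lt1)
      ((τ1 * P21 + m * P23) / Lt1) P23 ((τ1 * R21 + m * R23) / Lt1) R23 := by
  obtain ⟨hτ1, -, hR21, -, -, -, -, -, -, hP11, hP11b, hP12, hP12b, hP21, hP21b, hP23, hP23b,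
    hR12c, hR23c, hR11c, hR21c, hsumc⟩ := hF
  have hQ11 := add_mul_div_mem_Icc hLt1 hτ1 ht2 (by linarith) ⟨hP11, hP11b⟩ ⟨hP12, hP12b⟩
  have hQ21 := add_mul_div_mem_Icc hLt1 hτ1 hm (by linarith) ⟨hP21, hP21b⟩ ⟨hP23, hP23b⟩
  have hrate1 : B1 ≤ Lt1 * log2 (1 + α1 * ((τ1 * P11 + t2 * P12) / Lt1)) := by
    have h := log2_one_add_time_sharing hLt1 hτ1 ht2 le_rfl (by linarith)
      (mul_nonneg hα1 hP11) (mul_nonneg hα1 hP12) le_rfl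
    simp only [zero_mul, add_zero] at h
    rw [show (τ1 * (α1 * P11) + t2 * (α1 * P12)) / Lt1 = α1 * ((τ1 * P11 + t2 * P12) / Lt1) by
      ring] at h
    linarith [mul_le_mul_of_nonneg_left hR11c hτ1, mul_le_mul_of_nonneg_left hR12c ht2]
  have hrate2 : τ1 * R21 + m * R23 ≤ Lt1 * log2 (1 + α2 * ((τ1 * P21 + m * P23) / Lt1)) := by
    have h := log2_one_add_time_sharing hLt1 hτ1 hm le_rfl (by linarith)
      (mul_nonneg hα2 hP21) (mul_nonneg hα2 hP23) le_rfl
    simp only [zero_mul, add_zero] at h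
    rw [show (τ1 * (α2 * P21) + m * (α2 * P23)) / Lt1 = α2 * ((τ1 * P21 + m * P23) / Lt1) by
      ring] at h
    linarith [mul_le_mul_of_nonneg_left hR21c hτ1, mul_le_mul_of_nonneg_left hR23c hm]
  have hsum : B1 + (τ1 * R21 + m * R23) ≤ Lt1 * log2 (1 + α1 * ((τ1 * P11 + t2 * P12) / Lt1) +
      α2 * ((τ1 * P21 + m * P23) / Lt1)) := by
    have h := log2_one_add_time_sharing hLt1 hτ1 ht2 hm hslot
      (add_nonneg (mul_nonneg hα1 hP11) (mul_nonneg hα2 hP21)) (mul_nonneg hα1 hP12)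
      (mul_nonneg hα2 hP23)
    rw [show 1 + (τ1 * (α1 * P11 + α2 * P21) + t2 * (α1 * P12) + m * (α2 * P23)) / Lt1 =
      1 + α1 * ((τ1 * P11 + t2 * P12) / Lt1) + α2 * ((τ1 * P21 + m * P23) / Lt1) by ring] at h
    rw [add_assoc 1] at hsumc
    linarith [mul_le_mul_of_nonneg_left hsumc hτ1, mul_le_mul_of_nonneg_left hR12c ht2,
      mul_le_mul_of_nonneg_left hR23c hm]
  refine ⟨hQ11.1, hQ11.2, hQ21.1, hQ21.2, hP23, hP23b, (div_le_iff₀' hLt1).2 hrate1,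
    by positivity, (div_le_iff₀' hLt1).2 hrate2, ?_, ?_, hR23, hR23c, ?_⟩
  · rw [mul_div_cancel₀ _ hLt1.ne']
    nlinarith [mul_le_mul_of_nonneg_right hmt3 hR23.le]
  · rw [← add_div, div_le_iff₀' hLt1]
    exact hsum
  · rwa [sub_mul_div_eq_of_add_mul_eq hLt1.ne' hR23.ne' hB2]

theorem em_merge_eq (hLt1 : Lt1 ≠ 0) (hR23 : R23 ≠ 0) (hB2 : τ1 * R21 + t3 * R23 = B2) :
    EM B2 Lt1 ((τ1 * P11 + t2 * P12) / Lt1) ((τ1 * P21 + m * P23) / Lt1) P23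
      ((τ1 * R21 + m * R23) / Lt1) R23 = τ1 * (P11 + P21) + t2 * P12 + t3 * P23 := by
  rw [EM, sub_mul_div_eq_of_add_mul_eq hLt1 hR23 hB2]
  field_simp
  ring

theorem exists_smFeas_em_eq_threeObj (hα1 : 0 ≤ α1) (hα2 : 0 ≤ α2) (hLt1 : 0 < Lt1)
    (hL : Lt1 ≤ Lt2)
    (hF : ThreeFeas α1 α2 B1 B2 Pb1 Pb2 Lt1 Lt2 τ1 P11 P12 P21 P23 R11 R12 R21 R23)
    (hR12 : 0 < R12) (hR23 : 0 < R23) :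
    ∃ Q11 Q21 Q23 S21 S23, SMFeas α1 α2 B1 B2 Pb1 Pb2 Lt1 Lt2 Q11 Q21 Q23 S21 S23 ∧
      EM B2 Lt1 Q11 Q21 Q23 S21 S23 = ThreeObj B1 B2 τ1 P11 P12 P21 P23 R11 R12 R21 R23 := by
  obtain ⟨-, -, -, -, hB1le, -, hB2le, hslot, hdeadline, -⟩ := id hF
  set t2 := (B1 - τ1 * R11) / R12
  set t3 := (B2 - τ1 * R21) / R23
  -- user 2 moves as much of its solo transmission into the first slot as fits there
  set m := min t3 (Lt1 - τ1 - t2) with hm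
  have ht2 : 0 ≤ t2 := div_nonneg (sub_nonneg.2 hB1le) hR12.le
  have ht3 : 0 ≤ t3 := div_nonneg (sub_nonneg.2 hB2le) hR23.le
  have hB1 : τ1 * R11 + t2 * R12 = B1 := by rw [div_mul_cancel₀ _ hR12.ne']; ring
  have hB2 : τ1 * R21 + t3 * R23 = B2 := by rw [div_mul_cancel₀ _ hR23.ne']; ring
  have hdead : Lt1 + (t3 - m) ≤ Lt2 := by
    rcases min_cases t3 (Lt1 - τ1 - t2) with ⟨h, -⟩ | ⟨h, -⟩ <;> rw [hm, h] <;> linarith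
  refine ⟨_, _, _, _, _, smFeas_merge hα1 hα2 hLt1 hF hR23 ht2 hB1 hB2 (le_min ht3 (by linarith))
    (min_le_left _ _) (by linarith [min_le_right t3 (Lt1 - τ1 - t2)]) hdead, ?_⟩
  rw [em_merge_eq hLt1.ne' hR23.ne' hB2]
  rfl

end Merge

theorem exists_threeFeas_threeObj_eq_em {α1 α2 B1 B2 Pb1 Pb2 Lt1 Lt2 Q11 Q21 Q23 S21 S23 : ℝ}
    (hB1 : 0 < B1) (hLt1 : 0 < Lt1)
    (hF : SMFeas α1 α2 B1 B2 Pb1 Pb2 Lt1 Lt2 Q11 Q21 Q23 S21 S23) :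
    ∃ τ1 P11 P12 P21 P23 R11 R12 R21 R23,
      ThreeFeas α1 α2 B1 B2 Pb1 Pb2 Lt1 Lt2 τ1 P11 P12 P21 P23 R11 R12 R21 R23 ∧
      0 < R12 ∧ 0 < R23 ∧
      ThreeObj B1 B2 τ1 P11 P12 P21 P23 R11 R12 R21 R23 = EM B2 Lt1 Q11 Q21 Q23 S21 S23 := by
  obtain ⟨hQ11, hQ11b, hQ21, hQ21b, hQ23, hQ23b, hrate1, hS21, hrate2, hS21b, hsum, hS23, hrate3,
    hdeadline⟩ := hF
  have hR : 0 < B1 / Lt1 := div_pos hB1 hLt1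
  have hbits : Lt1 * (B1 / Lt1) = B1 := mul_div_cancel₀ _ hLt1.ne'
  refine ⟨Lt1, Q11, Q11, Q21, Q23, B1 / Lt1, B1 / Lt1, S21, S23,
    ⟨hLt1.le, hR.le, hS21, ?_, ?_, ?_, hS21b, ?_, ?_, hQ11, hQ11b, hQ11, hQ11b, hQ21, hQ21b, hQ23,
      hQ23b, hrate1, hrate3, hrate1, hrate2, hsum⟩, hR, hS23, ?_⟩
  · exact hbits.symm ▸ hB1.le
  · exact hbits.le
  · positivity
  · rw [hbits, sub_self, zero_div, add_zero]
  · rwa [hbits, sub_self, zero_div, add_zero]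
  · rw [ThreeObj, EM, hbits, sub_self, zero_div, zero_mul, add_zero]

theorem two_time_slots_suffice_general
    (α1 α2 B1 B2 Pb1 Pb2 Lt1 Lt2 : ℝ)
    (hα1 : 0 < α1) (hα2 : 0 < α2) (hB1 : 0 < B1)
    (hLt1 : 0 < Lt1)
    (hL : Lt1 ≤ Lt2) :
    (∀ τ1 P11 P12 P21 P23 R11 R12 R21 R23,
      ThreeFeas α1 α2 B1 B2 Pb1 Pb2 Lt1 Lt2 τ1 P11 P12 P21 P23 R11 R12 R21 R23 →
      0 < R12 → 0 < R23 →
      ∃ Q11 Q21 Q23 S21 S23,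
        SMFeas α1 α2 B1 B2 Pb1 Pb2 Lt1 Lt2 Q11 Q21 Q23 S21 S23 ∧
        EM B2 Lt1 Q11 Q21 Q23 S21 S23 =
          ThreeObj B1 B2 τ1 P11 P12 P21 P23 R11 R12 R21 R23) ∧
    sInf {E : ℝ | ∃ Q11 Q21 Q23 S21 S23,
        SMFeas α1 α2 B1 B2 Pb1 Pb2 Lt1 Lt2 Q11 Q21 Q23 S21 S23 ∧
        E = EM B2 Lt1 Q11 Q21 Q23 S21 S23} ≤
      sInf {E : ℝ | ∃ τ1 P11 P12 P21 P23 R11 R12 R21 R23,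
        ThreeFeas α1 α2 B1 B2 Pb1 Pb2 Lt1 Lt2 τ1 P11 P12 P21 P23 R11 R12 R21 R23 ∧
        0 < R12 ∧ 0 < R23 ∧
        E = ThreeObj B1 B2 τ1 P11 P12 P21 P23 R11 R12 R21 R23} := by
  -- the two value sets coincide, so no junk value of `sInf` can break the inequality
  refine ⟨fun _ _ _ _ _ _ _ _ _ => exists_smFeas_em_eq_threeObj hα1.le hα2.le hLt1 hL,
    le_of_eq (congrArg sInf (Set.ext fun E => ⟨?_, ?_⟩))⟩
  · rintro ⟨Q11, Q21, Q23, S21, S23, hF, rfl⟩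
    obtain ⟨τ1, P11, P12, P21, P23, R11, R12, R21, R23, hF3, hR12, hR23, hobj⟩ :=
      exists_threeFeas_threeObj_eq_em hB1 hLt1 hF
    exact ⟨τ1, P11, P12, P21, P23, R11, R12, R21, R23, hF3, hR12, hR23, hobj.symm⟩
  · rintro ⟨τ1, P11, P12, P21, P23, R11, R12, R21, R23, hF, hR12, hR23, rfl⟩
    obtain ⟨Q11, Q21, Q23, S21, S23, hF2, hobj⟩ :=
      exists_smFeas_em_eq_threeObj hα1.le hα2.le hLt1 hL hF hR12 hR23
    exact ⟨Q11, Q21, Q23, S21, S23, hF2, hobj.symm⟩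

/-- Appendix B conclusion: every feasible three-slot point (with R12 > 0, R23 > 0) has a
two-slot counterpart with the same objective value; hence two time slots suffice. -/
theorem two_time_slots_suffice
    (α1 α2 B1 B2 Pb1 Pb2 Lt1 Lt2 : ℝ)
    (hα1 : 0 < α1) (hα2 : 0 < α2) (hB1 : 0 < B1) (hB2 : 0 < B2)
    (hPb1 : 0 < Pb1) (hPb2 : 0 < Pb2) (hLt1 : 0 < Lt1) (hLt2 : 0 < Lt2)
    (hL : Lt1 ≤ Lt2) :
    (∀ τ1 P11 P12 P21 P23 R11 R12 R21 R23,
      ThreeFeas α1 α2 B1 B2 Pb1 Pb2 Lt1 Lt2 τ1 P11 P12 P21 P23 R11 R12 R21 R23 →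
      0 < R12 → 0 < R23 →
      ∃ Q11 Q21 Q23 S21 S23,
        SMFeas α1 α2 B1 B2 Pb1 Pb2 Lt1 Lt2 Q11 Q21 Q23 S21 S23 ∧
        EM B2 Lt1 Q11 Q21 Q23 S21 S23 =
          ThreeObj B1 B2 τ1 P11 P12 P21 P23 R11 R12 R21 R23) ∧
    sInf {E : ℝ | ∃ Q11 Q21 Q23 S21 S23,
        SMFeas α1 α2 B1 B2 Pb1 Pb2 Lt1 Lt2 Q11 Q21 Q23 S21 S23 ∧
        E = EM B2 Lt1 Q11 Q21 Q23 S21 S23} ≤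
      sInf {E : ℝ | ∃ τ1 P11 P12 P21 P23 R11 R12 R21 R23,
        ThreeFeas α1 α2 B1 B2 Pb1 Pb2 Lt1 Lt2 τ1 P11 P12 P21 P23 R11 R12 R21 R23 ∧
        0 < R12 ∧ 0 < R23 ∧
        E = ThreeObj B1 B2 τ1 P11 P12 P21 P23 R11 R12 R21 R23} :=
  two_time_slots_suffice_general α1 α2 B1 B2 Pb1 Pb2 Lt1 Lt2 hα1 hα2 hB1 hLt1 hL
end

section
/- Let L̃1, L̃2, α1, α2, B1, B2 be positive reals with L̃1 < L̃2, and let f(R) = L̃1·( (2^{B1/L̃1} − 1)/α1 + 2^{B1/L̃1}·(2^R − 1)/α2 ) + ((L̃2 − L̃1)/α2)·( 2^{(B2 − L̃1·R)/(L̃2 − L̃1)} − 1 ). Then f attains its global minimum over ℝ at the unique point R_d = B2/L̃2 − (L̃2 − L̃1)·B1/(L̃1·L̃2), and the derivative of f vanishes at R_d. -/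
/-! Write `u = B1/L̃1 + R` and `v = R23`. Up to an additive constant, `α2 · f R` equals
`L̃1 · 2^u + (L̃2 − L̃1) · 2^v`, while `L̃1 · u + (L̃2 − L̃1) · v = B1 + B2` does not depend on `R`.
So `f` is an increasing affine image of a convex combination of values of `2^x` whose barycentre is
fixed at `E = (B1 + B2)/L̃2`; by strict convexity it exceeds its value `2^E` unless `u = v = E`,
which happens exactly at `R = R_d`. A global minimum on `ℝ` is a critical point. -/

open Real Set

theorem strictConvexOn_rpow_left {b : ℝ} (hb : 1 < b) :
    StrictConvexOn ℝ univ fun x : ℝ => b ^ x := by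
  refine ⟨convex_univ, fun x _ y _ hxy a c ha hc hac => ?_⟩
  have hlog : log b ≠ 0 := (log_pos hb).ne'
  have := strictConvexOn_exp.2 (mem_univ (log b * x)) (mem_univ (log b * y))
    (by simpa [hlog] using hxy) ha hc hac
  simp only [smul_eq_mul, rpow_def_of_pos (zero_lt_one.trans hb)] at this ⊢
  convert this using 2
  ring

noncomputable section Energy

variable (Lt1 Lt2 α1 α2 B1 B2 : ℝ)

def energy (R : ℝ) : ℝ :=
  Lt1 * (((2 : ℝ) ^ (B1 / Lt1) - 1) / α1 + (2 : ℝ) ^ (B1 / Lt1) * ((2 : ℝ) ^ R - 1) / α2) +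
    ((Lt2 - Lt1) / α2) * ((2 : ℝ) ^ ((B2 - Lt1 * R) / (Lt2 - Lt1)) - 1)

def optimalRate : ℝ := B2 / Lt2 - (Lt2 - Lt1) * B1 / (Lt1 * Lt2)

variable {Lt1 Lt2 α1 α2 B1 B2}

theorem div_add_optimalRate (hLt1 : Lt1 ≠ 0) (hLt2 : Lt2 ≠ 0) :
    B1 / Lt1 + optimalRate Lt1 Lt2 B1 B2 = (B1 + B2) / Lt2 := by
  unfold optimalRate
  field_simp
  ring

theorem energy_sub_energy_optimalRate (hLt1 : 0 < Lt1) (hL : Lt1 < Lt2) (R : ℝ) :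
    energy Lt1 Lt2 α1 α2 B1 B2 R - energy Lt1 Lt2 α1 α2 B1 B2 (optimalRate Lt1 Lt2 B1 B2) =
      Lt1 / α2 * (2 : ℝ) ^ (B1 / Lt1 + R) +
        (Lt2 - Lt1) / α2 * (2 : ℝ) ^ ((B2 - Lt1 * R) / (Lt2 - Lt1)) -
        Lt2 / α2 * (2 : ℝ) ^ ((B1 + B2) / Lt2) := by
  have hΔ : Lt2 - Lt1 ≠ 0 := (sub_pos.mpr hL).ne'
  have hLt2 : Lt2 ≠ 0 := (hLt1.trans hL).ne'
  have hu := div_add_optimalRate (B1 := B1) (B2 := B2) hLt1.ne' hLt2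
  have hv : (B2 - Lt1 * optimalRate Lt1 Lt2 B1 B2) / (Lt2 - Lt1) = (B1 + B2) / Lt2 := by
    unfold optimalRate
    field_simp
    ring
  have eR := rpow_add two_pos (B1 / Lt1) R
  have eRd := rpow_add two_pos (B1 / Lt1) (optimalRate Lt1 Lt2 B1 B2)
  rw [hu] at eRd
  unfold energy
  rw [hv]
  linear_combination (-(Lt1 / α2)) * eR + (Lt1 / α2) * eRd

theorem energy_optimalRate_lt (hLt1 : 0 < Lt1) (hL : Lt1 < Lt2) (hα2 : 0 < α2) {R : ℝ}
    (hR : R ≠ optimalRate Lt1 Lt2 B1 B2) :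
    energy Lt1 Lt2 α1 α2 B1 B2 (optimalRate Lt1 Lt2 B1 B2) < energy Lt1 Lt2 α1 α2 B1 B2 R := by
  have hLt2 : 0 < Lt2 := hLt1.trans hL
  have hΔ : 0 < Lt2 - Lt1 := sub_pos.mpr hL
  set u := B1 / Lt1 + R
  set v := (B2 - Lt1 * R) / (Lt2 - Lt1)
  set a := Lt1 / Lt2
  have ha : 0 < a := div_pos hLt1 hLt2
  have ha' : 0 < 1 - a := by rw [sub_pos, div_lt_one hLt2]; exact hL
  have hmean : a * u + (1 - a) * v = (B1 + B2) / Lt2 := by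
    simp only [u, v, a]
    field_simp
    ring
  have huv : u ≠ v := by
    rintro huv
    rw [← huv, ← add_mul, add_sub_cancel, one_mul,
      ← div_add_optimalRate hLt1.ne' hLt2.ne'] at hmean
    exact hR (add_left_cancel hmean)
  have jensen : (2 : ℝ) ^ ((B1 + B2) / Lt2) < a * 2 ^ u + (1 - a) * 2 ^ v := by
    simpa only [smul_eq_mul, hmean] using
      (strictConvexOn_rpow_left one_lt_two).2 (mem_univ u) (mem_univ v) huv ha ha' (by ring)
  rw [← sub_pos, energy_sub_energy_optimalRate hLt1 hL]
  have hscale : Lt1 / α2 = Lt2 / α2 * a ∧ (Lt2 - Lt1) / α2 = Lt2 / α2 * (1 - a) := by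
    constructor <;> (simp only [a]; field_simp)
  rw [hscale.1, hscale.2]
  nlinarith [div_pos hLt2 hα2]

end Energy

theorem caseAI_objective_min_general
    (Lt1 Lt2 α1 α2 B1 B2 : ℝ)
    (hLt1 : 0 < Lt1) (hα2 : 0 < α2)
    (hL : Lt1 < Lt2)
    (f : ℝ → ℝ)
    (hf : f = fun R : ℝ =>
      Lt1 * (((2 : ℝ) ^ (B1 / Lt1) - 1) / α1 +
        (2 : ℝ) ^ (B1 / Lt1) * ((2 : ℝ) ^ R - 1) / α2) +
      ((Lt2 - Lt1) / α2) * ((2 : ℝ) ^ ((B2 - Lt1 * R) / (Lt2 - Lt1)) - 1))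
    (Rd : ℝ)
    (hRd : Rd = B2 / Lt2 - (Lt2 - Lt1) * B1 / (Lt1 * Lt2)) :
    (∀ R : ℝ, f Rd ≤ f R) ∧
    (∀ R : ℝ, (∀ S : ℝ, f R ≤ f S) → R = Rd) ∧
    deriv f Rd = 0 := by
  change f = energy Lt1 Lt2 α1 α2 B1 B2 at hf
  change Rd = optimalRate Lt1 Lt2 B1 B2 at hRd
  subst hf hRd
  have hlt : ∀ R, R ≠ optimalRate Lt1 Lt2 B1 B2 → _ := fun R hR =>
    energy_optimalRate_lt (α1 := α1) hLt1 hL hα2 hR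
  have hmin : ∀ R, energy Lt1 Lt2 α1 α2 B1 B2 (optimalRate Lt1 Lt2 B1 B2) ≤
      energy Lt1 Lt2 α1 α2 B1 B2 R := fun R =>
    (eq_or_ne R _).elim (fun h => h ▸ le_rfl) fun h => (hlt R h).le
  refine ⟨hmin, fun R hR => by_contra fun h => (hlt R h).not_ge (hR _), ?_⟩
  exact ((isMinOn_univ_iff.mpr hmin).isLocalMin Filter.univ_mem).deriv_eq_zero

/-- Case A-I: the two-slot full multiple access energy, as a function of user 2's
first-slot rate, attains its global minimum at the unique point
R_d = B2/L̃2 − (L̃2 − L̃1)·B1/(L̃1·L̃2), where its derivative vanishes. -/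
theorem caseAI_objective_min
    (Lt1 Lt2 α1 α2 B1 B2 : ℝ)
    (hLt1 : 0 < Lt1) (hLt2 : 0 < Lt2) (hα1 : 0 < α1) (hα2 : 0 < α2)
    (hB1 : 0 < B1) (hB2 : 0 < B2) (hL : Lt1 < Lt2)
    (f : ℝ → ℝ)
    (hf : f = fun R : ℝ =>
      Lt1 * (((2 : ℝ) ^ (B1 / Lt1) - 1) / α1 +
        (2 : ℝ) ^ (B1 / Lt1) * ((2 : ℝ) ^ R - 1) / α2) +
      ((Lt2 - Lt1) / α2) * ((2 : ℝ) ^ ((B2 - Lt1 * R) / (Lt2 - Lt1)) - 1))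
    (Rd : ℝ)
    (hRd : Rd = B2 / Lt2 - (Lt2 - Lt1) * B1 / (Lt1 * Lt2)) :
    (∀ R : ℝ, f Rd ≤ f R) ∧
    (∀ R : ℝ, (∀ S : ℝ, f R ≤ f S) → R = Rd) ∧
    deriv f Rd = 0 :=
  caseAI_objective_min_general Lt1 Lt2 α1 α2 B1 B2 hLt1 hα2 hL f hf Rd hRd
end

section
/- Let B, L̃, α, P̄ be positive reals with B/L̃ ≤ log2(1 + α·P̄). Then: (i) the point R* = B/L̃, P* = (2^{B/L̃} − 1)/α satisfies 0 ≤ P* ≤ P̄, 0 < R* ≤ log2(1 + α·P*), and B/R* ≤ L̃; and (ii) for every pair (P, R) with 0 ≤ P ≤ P̄, 0 < R ≤ log2(1 + α·P), and B/R ≤ L̃, one has (B/R)·P ≥ (B/R*)·P* = L̃·(2^{B/L̃} − 1)/α. (Closed-form optimal solution of the single offloading user problem: transmit at exactly the rate B/L̃ with the minimal power supporting it.) -/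
lemma le_log2_iff {r x : ℝ} (hx : 0 < x) : r ≤ log2 x ↔ (2 : ℝ) ^ r ≤ x :=
  Real.le_logb_iff_rpow_le one_lt_two hx

lemma log2_two_rpow (r : ℝ) : log2 ((2 : ℝ) ^ r) = r :=
  Real.logb_rpow two_pos one_lt_two.ne'

lemma rpow_sub_one_div_le_of_le {b r R : ℝ} (hb : 0 < b) (hr : 0 < r) (hrR : r ≤ R) :
    (b ^ r - 1) / r ≤ (b ^ R - 1) / R := by
  simpa using (convexOn_rpow_left hb).secant_mono (a := 0) trivial trivial trivial
    hr.ne' (hr.trans_le hrR).ne' hrR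

lemma optimal_energy_le_energy {B L α P R : ℝ} (hB : 0 < B) (hL : 0 < L) (hα : 0 < α) (hP : 0 ≤ P)
    (hR : 0 < R) (hRP : R ≤ log2 (1 + α * P)) (hRL : B / R ≤ L) :
    L * ((2 : ℝ) ^ (B / L) - 1) / α ≤ B / R * P := by
  have hrate : B / L ≤ R := (div_le_comm₀ hR hL).1 hRL
  have hpower : ((2 : ℝ) ^ R - 1) / α ≤ P := by
    have := (le_log2_iff (by positivity)).1 hRP
    rw [div_le_iff₀ hα]
    linarith
  calc L * ((2 : ℝ) ^ (B / L) - 1) / α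
      = B / α * (((2 : ℝ) ^ (B / L) - 1) / (B / L)) := by field_simp
    _ ≤ B / α * (((2 : ℝ) ^ R - 1) / R) :=
        mul_le_mul_of_nonneg_left (rpow_sub_one_div_le_of_le two_pos (by positivity) hrate)
          (by positivity)
    _ = B / R * (((2 : ℝ) ^ R - 1) / α) := by field_simp
    _ ≤ B / R * P := by gcongr

/-- Closed-form optimal solution of the single offloading user problem: transmit at exactly
the rate B/L̃ with the minimal power supporting it. -/
theorem single_user_optimal
    (B Lt α Pb : ℝ)
    (hB : 0 < B) (hLt : 0 < Lt) (hα : 0 < α) (hPb : 0 < Pb)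
    (hfeas : B / Lt ≤ log2 (1 + α * Pb))
    (Rs Ps : ℝ)
    (hRs : Rs = B / Lt)
    (hPs : Ps = ((2 : ℝ) ^ (B / Lt) - 1) / α) :
    (0 ≤ Ps ∧ Ps ≤ Pb ∧ 0 < Rs ∧ Rs ≤ log2 (1 + α * Ps) ∧ B / Rs ≤ Lt) ∧
    (B / Rs) * Ps = Lt * ((2 : ℝ) ^ (B / Lt) - 1) / α ∧
    (∀ P R : ℝ, 0 ≤ P → P ≤ Pb → 0 < R → R ≤ log2 (1 + α * P) → B / R ≤ Lt →
      (B / Rs) * Ps ≤ (B / R) * P) := by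
  subst hRs hPs
  have hrate : 0 < B / Lt := by positivity
  have hlatency : B / (B / Lt) = Lt := div_div_cancel₀ hB.ne'
  have hsupport : 1 + α * (((2 : ℝ) ^ (B / Lt) - 1) / α) = (2 : ℝ) ^ (B / Lt) := by
    field_simp
    ring
  have hbudget : (2 : ℝ) ^ (B / Lt) ≤ 1 + α * Pb := (le_log2_iff (by positivity)).1 hfeas
  refine ⟨⟨?_, ?_, hrate, ?_, hlatency.le⟩, ?_, ?_⟩
  · exact div_nonneg (sub_nonneg.2 (Real.one_le_rpow one_le_two hrate.le)) hα.le
  · rw [div_le_iff₀ hα]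
    linarith
  · rw [hsupport, log2_two_rpow]
  · rw [hlatency, mul_div_assoc]
  · intro P R hP _ hR hRP hRL
    rw [hlatency, ← mul_div_assoc]
    exact optimal_energy_le_energy hB hLt hα hP hR hRP hRL
end

section
/- Let α1, α2, P̄1, P̄2, B1, L̃1 be positive reals and R21 ≥ 0. The interval max{ (2^{B1/L̃1} − 1)/α1 , (2^{B1/L̃1 + R21} − 1 − α2·P̄2)/α1 } ≤ P ≤ min{ P̄1 , 2^{R21}·(2^{B1/L̃1} − 1)/α1 } is nonempty if and only if B1/L̃1 ≤ log2(1 + α1·P̄1) and R21 ≤ min{ log2(1 + α2·P̄2) , log2(1 + α1·P̄1 + α2·P̄2) − B1/L̃1 }. -/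
section IntervalEndpoints

variable {K : Type*} [Field K] [LinearOrder K] [IsStrictOrderedRing K] {a c r s x y : K}

lemma sub_one_div_le_iff (ha : 0 < a) : (x - 1) / a ≤ y ↔ x ≤ 1 + a * y := by
  rw [div_le_iff₀ ha]
  constructor <;> intro <;> linarith

lemma sub_one_sub_div_le_iff (ha : 0 < a) : (x - 1 - c) / a ≤ y ↔ x ≤ 1 + a * y + c := by
  rw [div_le_iff₀ ha]
  constructor <;> intro <;> linarith

lemma mul_sub_one_sub_div_le_mul_sub_one_div_iff (ha : 0 < a) :
    (s * r - 1 - c) / a ≤ r * (s - 1) / a ↔ r ≤ 1 + c := by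
  rw [div_le_div_iff_of_pos_right ha]
  constructor <;> intro <;> linarith

lemma sub_one_div_le_mul_sub_one_div (ha : 0 ≤ a) (hs : 1 ≤ s) (hr : 1 ≤ r) :
    (s - 1) / a ≤ r * (s - 1) / a :=
  div_le_div_of_nonneg_right (le_mul_of_one_le_left (sub_nonneg.2 hs) hr) ha

end IntervalEndpoints

lemma le_log2_iff_two_rpow_le {x y : ℝ} (hy : 0 < y) : x ≤ log2 y ↔ (2 : ℝ) ^ x ≤ y :=
  Real.le_logb_iff_rpow_le one_lt_two hy

/-- The feasible interval for user 1's first-slot power (given user 2's first-slot rate R21)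
is nonempty iff B1/L̃1 ≤ log2(1 + α1·P̄1) and
R21 ≤ min{log2(1 + α2·P̄2), log2(1 + α1·P̄1 + α2·P̄2) − B1/L̃1}. -/
theorem power_interval_nonempty_iff
    (α1 α2 Pb1 Pb2 B1 Lt1 R21 : ℝ)
    (hα1 : 0 < α1) (hα2 : 0 < α2) (hPb1 : 0 < Pb1) (hPb2 : 0 < Pb2)
    (hB1 : 0 < B1) (hLt1 : 0 < Lt1) (hR21 : 0 ≤ R21) :
    (∃ P : ℝ,
      max (((2 : ℝ) ^ (B1 / Lt1) - 1) / α1)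
          (((2 : ℝ) ^ (B1 / Lt1 + R21) - 1 - α2 * Pb2) / α1) ≤ P ∧
      P ≤ min Pb1 ((2 : ℝ) ^ R21 * ((2 : ℝ) ^ (B1 / Lt1) - 1) / α1)) ↔
    (B1 / Lt1 ≤ log2 (1 + α1 * Pb1) ∧
      R21 ≤ min (log2 (1 + α2 * Pb2)) (log2 (1 + α1 * Pb1 + α2 * Pb2) - B1 / Lt1)) := by
  set b := B1 / Lt1
  have hs : 1 ≤ (2 : ℝ) ^ b := Real.one_le_rpow one_le_two (by positivity)
  have hr : 1 ≤ (2 : ℝ) ^ R21 := Real.one_le_rpow one_le_two hR21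
  have h_first_le_last := sub_one_div_le_mul_sub_one_div hα1.le hs hr
  rw [show (∃ P, _ ∧ _) ↔ _ from Set.nonempty_Icc, max_le_iff, le_min_iff, le_min_iff,
    sub_one_div_le_iff hα1, sub_one_sub_div_le_iff hα1, Real.rpow_add two_pos,
    mul_sub_one_sub_div_le_mul_sub_one_div_iff hα1, le_min_iff, le_sub_iff_add_le, add_comm R21,
    le_log2_iff_two_rpow_le (by positivity : (0 : ℝ) < 1 + α1 * Pb1),
    le_log2_iff_two_rpow_le (by positivity : (0 : ℝ) < 1 + α2 * Pb2),
    le_log2_iff_two_rpow_le (by positivity : (0 : ℝ) < 1 + α1 * Pb1 + α2 * Pb2),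
    Real.rpow_add two_pos]
  tauto
end

section
/- Let α1, α2, B1, B2, P̄1, P̄2, L̃1, L̃2 be positive reals with L̃1 < L̃2. The feasible set S_M of the two-slot full multiple access offloading problem is nonempty if and only if both of the following hold: (i) B1/L̃1 ≤ log2(1 + α1·P̄1), and (ii) max{ 0 , (B2 − (L̃2 − L̃1)·log2(1 + α2·P̄2))/L̃1 } ≤ min{ log2(1 + α2·P̄2) , log2(1 + α1·P̄1 + α2·P̄2) − B1/L̃1 }. -/
/-! Every constraint is monotone in the powers, so one may transmit at full power. Writing
`C2 = log2 (1 + α2 P̄2)`, a third-slot rate `R23 ≤ C2` with `(B2 - L̃1 R21) / R23 ≤ L̃2 - L̃1`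
exists exactly when `B2 - L̃1 R21 ≤ (L̃2 - L̃1) C2`. What remains is an interval of admissible
first-slot rates `R21`, whose ends are the two sides of (ii); its further upper bound `B2 / L̃1`
never lies below the lower end. -/

lemma log2_le_log2 {x y : ℝ} (hx : 0 < x) (hxy : x ≤ y) : log2 x ≤ log2 y :=
  Real.logb_le_logb_of_le one_lt_two hx hxy

lemma log2_pos {x : ℝ} (hx : 1 < x) : 0 < log2 x :=
  Real.logb_pos one_lt_two hx

lemma SMFeas.full_power {α1 α2 B1 B2 Pb1 Pb2 Lt1 Lt2 P11 P21 P23 R21 R23 : ℝ}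
    (hα1 : 0 ≤ α1) (hα2 : 0 ≤ α2)
    (h : SMFeas α1 α2 B1 B2 Pb1 Pb2 Lt1 Lt2 P11 P21 P23 R21 R23) :
    SMFeas α1 α2 B1 B2 Pb1 Pb2 Lt1 Lt2 Pb1 Pb2 Pb2 R21 R23 := by
  obtain ⟨hP11, hP11b, hP21, hP21b, hP23, hP23b, h1, hR21, h21, hB2, h12, hR23, h23, hT⟩ := h
  refine ⟨hP11.trans hP11b, le_rfl, hP21.trans hP21b, le_rfl, hP23.trans hP23b, le_rfl,
    h1.trans (log2_le_log2 (by positivity) (by gcongr)), hR21,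
    h21.trans (log2_le_log2 (by positivity) (by gcongr)), hB2,
    h12.trans (log2_le_log2 (by positivity) (by gcongr)), hR23,
    h23.trans (log2_le_log2 (by positivity) (by gcongr)), hT⟩

lemma exists_rate_div_le_iff {b C T : ℝ} (hC : 0 < C) (hT : 0 ≤ T) :
    (∃ r, 0 < r ∧ r ≤ C ∧ b / r ≤ T) ↔ b ≤ T * C := by
  constructor
  · rintro ⟨r, hr, hrC, hbr⟩
    calc b ≤ T * r := (div_le_iff₀ hr).mp hbr
      _ ≤ T * C := mul_le_mul_of_nonneg_left hrC hT
  · exact fun hb => ⟨C, hC, le_rfl, (div_le_iff₀ hC).mpr hb⟩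

lemma exists_first_slot_rate_iff {L B S C E : ℝ} (hL : 0 < L) (hB : 0 ≤ B) (hS : 0 ≤ S) :
    (∃ R, 0 ≤ R ∧ R ≤ C ∧ L * R ≤ B ∧ R ≤ E ∧ B - L * R ≤ S) ↔
      max 0 ((B - S) / L) ≤ min C E := by
  constructor
  · rintro ⟨R, hR, hRC, -, hRE, hRS⟩
    have hlow : (B - S) / L ≤ R := (div_le_iff₀ hL).mpr (by linarith)
    exact max_le (le_min (hR.trans hRC) (hR.trans hRE)) (le_min (hlow.trans hRC) (hlow.trans hRE))
  · intro h
    set R := max 0 ((B - S) / L)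
    have hRlow : B - S ≤ R * L := (div_le_iff₀ hL).mp (le_max_right _ _)
    have hRup : R * L ≤ B := (le_div_iff₀ hL).mp <|
      max_le (div_nonneg hB hL.le) (div_le_div_of_nonneg_right (by linarith) hL.le)
    exact ⟨R, le_max_left _ _, h.trans (min_le_left _ _), by linarith, h.trans (min_le_right _ _),
      by linarith⟩

theorem twoslot_feasible_iff_general
    (α1 α2 B1 B2 Pb1 Pb2 Lt1 Lt2 : ℝ)
    (hα1 : 0 < α1) (hα2 : 0 < α2) (hB2 : 0 < B2)
    (hPb1 : 0 < Pb1) (hPb2 : 0 < Pb2) (hLt1 : 0 < Lt1)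
    (hL : Lt1 < Lt2) :
    (∃ P11 P21 P23 R21 R23,
        SMFeas α1 α2 B1 B2 Pb1 Pb2 Lt1 Lt2 P11 P21 P23 R21 R23) ↔
    (B1 / Lt1 ≤ log2 (1 + α1 * Pb1) ∧
      max 0 ((B2 - (Lt2 - Lt1) * log2 (1 + α2 * Pb2)) / Lt1) ≤
        min (log2 (1 + α2 * Pb2)) (log2 (1 + α1 * Pb1 + α2 * Pb2) - B1 / Lt1)) := by
  have hC2 : 0 < log2 (1 + α2 * Pb2) := log2_pos (by nlinarith)
  have hT : 0 ≤ Lt2 - Lt1 := by linarith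
  have thirdSlot (R21 : ℝ) := exists_rate_div_le_iff (b := B2 - Lt1 * R21) hC2 hT
  have firstSlot := exists_first_slot_rate_iff (C := log2 (1 + α2 * Pb2))
    (E := log2 (1 + α1 * Pb1 + α2 * Pb2) - B1 / Lt1) hLt1 hB2.le (mul_nonneg hT hC2.le)
  constructor
  · rintro ⟨P11, P21, P23, R21, R23, h⟩
    obtain ⟨-, -, -, -, -, -, h1, hR21, h21, hB, h12, hR23, h23, hdeadline⟩ :=
      h.full_power hα1.le hα2.le
    have hS := (thirdSlot R21).mp ⟨R23, hR23, h23, by linarith⟩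
    exact ⟨h1, firstSlot.mp ⟨R21, hR21, h21, hB, by linarith, hS⟩⟩
  · rintro ⟨h1, h2⟩
    obtain ⟨R21, hR21, h21, hB, h12, hS⟩ := firstSlot.mpr h2
    obtain ⟨R23, hR23, h23, hdeadline⟩ := (thirdSlot R21).mpr hS
    exact ⟨Pb1, Pb2, Pb2, R21, R23, hPb1.le, le_rfl, hPb2.le, le_rfl, hPb2.le, le_rfl, h1,
      hR21, h21, hB, by linarith, hR23, h23, by linarith⟩

/-- Feasibility characterization of the two-slot full multiple access offloading problem. -/
theorem twoslot_feasible_iff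
    (α1 α2 B1 B2 Pb1 Pb2 Lt1 Lt2 : ℝ)
    (hα1 : 0 < α1) (hα2 : 0 < α2) (hB1 : 0 < B1) (hB2 : 0 < B2)
    (hPb1 : 0 < Pb1) (hPb2 : 0 < Pb2) (hLt1 : 0 < Lt1) (hLt2 : 0 < Lt2)
    (hL : Lt1 < Lt2) :
    (∃ P11 P21 P23 R21 R23,
        SMFeas α1 α2 B1 B2 Pb1 Pb2 Lt1 Lt2 P11 P21 P23 R21 R23) ↔
    (B1 / Lt1 ≤ log2 (1 + α1 * Pb1) ∧
      max 0 ((B2 - (Lt2 - Lt1) * log2 (1 + α2 * Pb2)) / Lt1) ≤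
        min (log2 (1 + α2 * Pb2)) (log2 (1 + α1 * Pb1 + α2 * Pb2) - B1 / Lt1)) :=
  twoslot_feasible_iff_general α1 α2 B1 B2 Pb1 Pb2 Lt1 Lt2 hα1 hα2 hB2 hPb1 hPb2 hLt1 hL
end
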